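/- arXiv:2605.21753 — 5 statements merged into one kernel-verified Lean document; each statement's English description precedes it below -/
import Mathlib

section
/- Let x, y be coprime integers with x, y > 1, and let ℓ ≥ x and m ≥ y be integers. Set F = (x-1)(y-1) and S = ℓy + mx. Then every integer N with F ≤ N ≤ S - F can be written as N = αy + βx with integers 0 ≤ α ≤ ℓ and 0 ≤ β ≤ m. -/
/-!
The representations `N = α * y + β * x` form a single line `(α + t * x, β - t * y)`, so one can
be chosen with `α` in any window of length `x`, or with `β` in any window of length `y`.
With `0 ≤ α < x` the bound `(x - 1) * (y - 1) ≤ N` forces `0 ≤ β`; applied to the complementary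
representation `ℓ * y + m * x - N = (ℓ - α) * y + (m - β) * x`, the same bound shows that
`m - y < β ≤ m` forces `α ≤ ℓ`. If the first representation has `β > m`, the second lies
further along the line, so its `α` exceeds the first one's and is nonnegative: it lies in the box.
-/

theorem IsCoprime.exists_mem_Ico_eq_mul_add_mul {x y : ℤ} (hxy : IsCoprime x y) (hx : 0 < x)
    (c N : ℤ) : ∃ α β : ℤ, α ∈ Set.Ico c (c + x) ∧ N = α * y + β * x := by
  obtain ⟨a, b, hab⟩ := hxy
  have hdiv := Int.mul_ediv_add_emod (N * b - c) x
  refine ⟨c + (N * b - c) % x, N * a + (N * b - c) / x * y, ⟨?_, ?_⟩, ?_⟩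
  · linarith [Int.emod_nonneg (N * b - c) hx.ne']
  · linarith [Int.emod_lt_of_pos (N * b - c) hx]
  · linear_combination (-N) * hab - y * hdiv

theorem nonneg_of_sub_one_mul_sub_one_le {x y N α β : ℤ} (hx : 0 < x) (hy : 0 ≤ y)
    (hα : α < x) (hN : (x - 1) * (y - 1) ≤ N) (h : N = α * y + β * x) : 0 ≤ β := by
  have hαy : α * y ≤ (x - 1) * y := mul_le_mul_of_nonneg_right (by omega) hy
  have : 0 < (β + 1) * x := by linarith
  have hβ := pos_of_mul_pos_left this hx.le
  omega

theorem stmt_0 (x y ℓ m N : ℤ) (hx : 1 < x) (hy : 1 < y) (hcop : IsCoprime x y)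
    (hl : x ≤ ℓ) (hm : y ≤ m)
    (hN1 : (x - 1) * (y - 1) ≤ N) (hN2 : N ≤ ℓ * y + m * x - (x - 1) * (y - 1)) :
    ∃ α β : ℤ, 0 ≤ α ∧ α ≤ ℓ ∧ 0 ≤ β ∧ β ≤ m ∧ N = α * y + β * x := by
  obtain ⟨α₁, β₁, ⟨hα₁, hα₁x⟩, h₁⟩ := hcop.exists_mem_Ico_eq_mul_add_mul (by omega) 0 N
  obtain ⟨β₂, α₂, ⟨hβ₂, hβ₂m⟩, h₂⟩ :=
    hcop.symm.exists_mem_Ico_eq_mul_add_mul (by omega) (m - y + 1) N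
  have hβ₁ : 0 ≤ β₁ :=
    nonneg_of_sub_one_mul_sub_one_le (by omega) (by omega) (by omega) hN1 h₁
  have hα₂ : α₂ ≤ ℓ := by
    have := nonneg_of_sub_one_mul_sub_one_le (x := y) (y := x) (N := ℓ * y + m * x - N)
      (α := m - β₂) (β := ℓ - α₂) (by omega) (by omega) (by omega) (by linarith)
      (by rw [h₂]; ring)
    omega
  by_cases hβ₁m : β₁ ≤ m
  · exact ⟨α₁, β₁, hα₁, by omega, hβ₁, hβ₁m, h₁⟩
  · have hline : (α₂ - α₁) * y = (β₁ - β₂) * x := by linarith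
    have : 0 < (α₂ - α₁) * y := hline ▸ mul_pos (by omega) (by omega)
    have hα₁₂ := pos_of_mul_pos_left this (by omega)
    exact ⟨α₂, β₂, by omega, hα₂, by omega, by omega, by linarith⟩
end

section
/- Let p be prime, g a nonzero element of ℤ/p, and y ≥ 1 an integer. Write AP(v, ℓ) = {t·v : 0 ≤ t ≤ ℓ} ⊆ ℤ/p. If ℓ and m are nonnegative integers with m ≥ y and m + ℓy ≤ p - 1, then AP(yg, ℓ) + AP(g, m) = AP(g, m + ℓy), where + denotes the sumset. -/
/-! The identity already holds for the index sets in `ℕ`: every `u ≤ m + ℓ y` is `t y + s` with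
`t ≤ ℓ`, `s ≤ m`, provided the steps `y` are no longer than `m + 1`. The additive map `t ↦ t • g`
carries it over to `ℤ/p`; no wrap-around modulo `p` is involved. -/

open Pointwise

def AP {p : ℕ} (v : ZMod p) (ℓ : ℕ) : Set (ZMod p) := {z | ∃ t : ℕ, t ≤ ℓ ∧ z = t • v}

theorem Nat.image_mul_right_Iic_add_Iic {y m : ℕ} (ℓ : ℕ) (hy : y ≤ m + 1) :
    (· * y) '' Set.Iic ℓ + Set.Iic m = Set.Iic (m + ℓ * y) := by
  ext u
  constructor
  · rintro ⟨_, ⟨t, ht, rfl⟩, s, hs, rfl⟩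
    have : t * y ≤ ℓ * y := Nat.mul_le_mul_right y ht
    simp only [Set.mem_Iic] at *
    omega
  · intro hu
    rw [Set.mem_Iic] at hu
    -- Take as many steps of length `y` as possible, but at most `ℓ`; what is left is below `y`.
    have hrem : u % y ≤ m := by
      rcases Nat.eq_zero_or_pos y with rfl | hpos
      · simpa using hu
      · have := Nat.mod_lt u hpos
        omega
    refine ⟨min ℓ (u / y) * y, ⟨min ℓ (u / y), Set.mem_Iic.2 (min_le_left _ _), rfl⟩,
      u - min ℓ (u / y) * y, ?_, ?_⟩
    · have := Nat.div_add_mod' u y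
      rcases min_choice ℓ (u / y) with h | h <;> rw [h, Set.mem_Iic] <;> omega
    · have := (Nat.mul_le_mul_right y (min_le_right ℓ (u / y))).trans (Nat.div_mul_le_self u y)
      change _ + (u - _) = u
      omega

theorem AP_eq_image_Iic {p : ℕ} (v : ZMod p) (ℓ : ℕ) : AP v ℓ = (· • v) '' Set.Iic ℓ := by
  ext z
  simp [AP, eq_comm]

theorem stmt_2_general (p : ℕ) (g : ZMod p)
    (y ℓ m : ℕ) (hm : y ≤ m) :
    AP (y • g) ℓ + AP g m = AP g (m + ℓ * y) := by
  have hstep : (· • y • g) = (· • g) ∘ (· * y) := funext fun t => (mul_nsmul' g t y).symm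
  rw [AP_eq_image_Iic, AP_eq_image_Iic, AP_eq_image_Iic, hstep, Set.image_comp,
    ← Nat.image_mul_right_Iic_add_Iic ℓ (by omega : y ≤ m + 1)]
  exact (Set.image_add (multiplesHom (ZMod p) g)).symm

theorem stmt_2 (p : ℕ) [Fact p.Prime] (g : ZMod p) (hg : g ≠ 0)
    (y ℓ m : ℕ) (hy : 1 ≤ y) (hm : y ≤ m) (hle : m + ℓ * y ≤ p - 1) :
    AP (y • g) ℓ + AP g m = AP g (m + ℓ * y) :=
  stmt_2_general p g y ℓ m hm
end

section
/- Let p be prime and let v, w be nonzero elements of ℤ/p. Suppose x, y are positive coprime integers with x, y > 1, x ≤ ℓ, y ≤ m, and xv = yw in ℤ/p. Let g = v·y⁻¹ (= w·x⁻¹) in ℤ/p, F = (x-1)(y-1), and L = mx + ℓy - 2F. Then {F·g + t·g : 0 ≤ t ≤ L} ⊆ AP(v, ℓ) + AP(w, m). -/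
/-!
Write `n = F + t` with `F = (x - 1)(y - 1)`; since `y • g = v` and `x • g = w`, it suffices to
write `n = a y + b x` with `0 ≤ a ≤ ℓ` and `0 ≤ b ≤ m`. The integer solutions of `n = a y + b x`
form the line `(a₀ + j x, b₀ - j y)`. Taking `j` as large as the two constraints `a ≤ ℓ` and
`b ≥ 0` allow, one of them is tight up to one period: either `b < y`, and then `n ≥ F` forces
`a ≥ 0`, or `a > ℓ - x`, and then `n + F ≤ m x + ℓ y` forces `b ≤ m`. The second case is the
first one applied to `(ℓ - a, m - b)`, which solve `m x + ℓ y - n = (ℓ - a) y + (m - b) x`.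
-/

open Pointwise

namespace Int

variable {x y n a b : ℤ}

theorem nonneg_of_eq_mul_add_mul_of_lt (hx : 0 ≤ x) (hy : 0 < y) (hn : (x - 1) * (y - 1) ≤ n)
    (hab : n = a * y + b * x) (hby : b < y) : 0 ≤ a := by
  by_contra! ha
  have hay : a * y ≤ -y := by nlinarith
  have hbx : b * x ≤ (y - 1) * x := by nlinarith
  nlinarith

theorem exists_eq_mul_add_mul_of_le {ℓ m : ℤ} (hx : 0 < x) (hy : 0 < y) (hxl : x ≤ ℓ + 1)
    (hym : y ≤ m + 1) (hcop : IsCoprime x y) (hn : (x - 1) * (y - 1) ≤ n)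
    (hnF : n + (x - 1) * (y - 1) ≤ m * x + ℓ * y) :
    ∃ a b, 0 ≤ a ∧ a ≤ ℓ ∧ 0 ≤ b ∧ b ≤ m ∧ n = a * y + b * x := by
  obtain ⟨u, v, huv⟩ := hcop
  set a₀ := n * v
  set b₀ := n * u
  set j := min (b₀ / y) ((ℓ - a₀) / x) with hj_def
  have hab : n = (a₀ + j * x) * y + (b₀ - j * y) * x := by
    linear_combination (-n) * huv
  have ha_le : a₀ + j * x ≤ ℓ := by
    have := Int.ediv_mul_le (ℓ - a₀) hx.ne'
    nlinarith [min_le_right (b₀ / y) ((ℓ - a₀) / x)]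
  have hb_nonneg : 0 ≤ b₀ - j * y := by
    have := Int.ediv_mul_le b₀ hy.ne'
    nlinarith [min_le_left (b₀ / y) ((ℓ - a₀) / x)]
  rcases min_choice (b₀ / y) ((ℓ - a₀) / x) with hj | hj <;> rw [← hj_def] at hj
  · have hb_lt : b₀ - j * y < y := by
      have := Int.lt_ediv_add_one_mul_self b₀ hy
      rw [hj]; linarith
    exact ⟨_, _, nonneg_of_eq_mul_add_mul_of_lt hx.le hy hn hab hb_lt, ha_le, hb_nonneg,
      by linarith, hab⟩
  · have ha_gt : ℓ - (a₀ + j * x) < x := by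
      have := Int.lt_ediv_add_one_mul_self (ℓ - a₀) hx
      rw [hj]; linarith
    have := nonneg_of_eq_mul_add_mul_of_lt hy.le hx (by linarith) (n := m * x + ℓ * y - n)
      (a := m - (b₀ - j * y)) (b := ℓ - (a₀ + j * x)) (by rw [hab]; ring) ha_gt
    exact ⟨_, _, by linarith, ha_le, hb_nonneg, by linarith, hab⟩

end Int

theorem ZMod.natCast_ne_zero_of_nsmul_eq_nsmul {p : ℕ} [Fact p.Prime] {v w : ZMod p} {x y : ℕ}
    (hv : v ≠ 0) (hcop : Nat.Coprime x y) (h : x • v = y • w) : (y : ZMod p) ≠ 0 := by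
  intro hy
  have hx : (x : ZMod p) = 0 := by
    rw [nsmul_eq_mul, nsmul_eq_mul, hy, zero_mul] at h
    exact (mul_eq_zero.mp h).resolve_right hv
  have hp : p ∣ Nat.gcd x y :=
    Nat.dvd_gcd ((ZMod.natCast_eq_zero_iff x p).mp hx) ((ZMod.natCast_eq_zero_iff y p).mp hy)
  exact (Fact.out : p.Prime).not_dvd_one (hcop ▸ hp)

theorem stmt_3_general (p : ℕ) [Fact p.Prime] (v w g : ZMod p) (hv : v ≠ 0)
    (x y ℓ m : ℕ) (hx : 1 < x) (hy : 1 < y) (hxl : x ≤ ℓ) (hym : y ≤ m)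
    (hcop : Nat.gcd x y = 1) (hcol : x • v = y • w)
    (hg : g = v * (y : ZMod p)⁻¹) :
    {z : ZMod p | ∃ t : ℕ, t ≤ m * x + ℓ * y - 2 * ((x - 1) * (y - 1)) ∧
        z = ((x - 1) * (y - 1)) • g + t • g}
      ⊆ AP v ℓ + AP w m := by
  rintro _ ⟨t, ht, rfl⟩
  have hy0 := ZMod.natCast_ne_zero_of_nsmul_eq_nsmul hv hcop hcol
  have hyg : (y : ZMod p) * g = v := by rw [hg]; field_simp
  have hxg : (x : ZMod p) * g = w := by
    rw [hg]; field_simp; simpa only [nsmul_eq_mul] using hcol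
  have hFx : (x - 1) * (y - 1) ≤ m * x :=
    (Nat.mul_le_mul (by omega) (by omega)).trans_eq (Nat.mul_comm x m)
  have hFy : (x - 1) * (y - 1) ≤ ℓ * y := Nat.mul_le_mul (by omega) (by omega)
  have hF : (((x - 1) * (y - 1) : ℕ) : ℤ) = ((x : ℤ) - 1) * ((y : ℤ) - 1) := by
    push_cast [Nat.cast_sub hx.le, Nat.cast_sub hy.le]; ring
  obtain ⟨a, b, ha, haℓ, hb, hbm, hab⟩ := Int.exists_eq_mul_add_mul_of_le
    (n := ((x - 1) * (y - 1) + t : ℕ)) (ℓ := ℓ) (m := m) (by omega) (by omega) (by omega)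
    (by omega) (Nat.isCoprime_iff_coprime.mpr hcop) (by push_cast; omega) (by push_cast; omega)
  lift a to ℕ using ha
  lift b to ℕ using hb
  refine ⟨a • v, ⟨a, by omega, rfl⟩, b • w, ⟨b, by omega, rfl⟩, ?_⟩
  have habN : (x - 1) * (y - 1) + t = a * y + b * x := by exact_mod_cast hab
  rw [← hyg, ← hxg, ← add_nsmul, habN]
  simp only [nsmul_eq_mul, Nat.cast_add, Nat.cast_mul]
  ring

theorem stmt_3 (p : ℕ) [Fact p.Prime] (v w g : ZMod p) (hv : v ≠ 0) (hw : w ≠ 0)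
    (x y ℓ m : ℕ) (hx : 1 < x) (hy : 1 < y) (hxl : x ≤ ℓ) (hym : y ≤ m)
    (hcop : Nat.gcd x y = 1) (hcol : x • v = y • w)
    (hg : g = v * (y : ZMod p)⁻¹) :
    {z : ZMod p | ∃ t : ℕ, t ≤ m * x + ℓ * y - 2 * ((x - 1) * (y - 1)) ∧
        z = ((x - 1) * (y - 1)) • g + t • g}
      ⊆ AP v ℓ + AP w m :=
  stmt_3_general p v w g hv x y ℓ m hx hy hxl hym hcop hcol hg
end

section
/- Let p be prime and d₁, ..., d_{p-1} nonzero elements of ℤ/p. Then the sumset {0, d₁} + {0, d₂} + ... + {0, d_{p-1}} equals all of ℤ/p; in particular, for every τ ∈ ℤ/p there is a subset J ⊆ {1, ..., p-1} with ∑_{j∈J} d_j = τ. -/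
open Pointwise


theorem stmt_6 (p : ℕ) [Fact p.Prime] (d : Fin (p - 1) → ZMod p)
    (hd : ∀ i, d i ≠ 0) (τ : ZMod p) :
    ∃ J : Finset (Fin (p - 1)), ∑ j ∈ J, d j = τ := by
  have hp : p.Prime := Fact.out
  set S : ℕ → Finset (ZMod p) := fun k =>
    ((Finset.univ : Finset (Fin (p - 1))).filter (fun i : Fin (p - 1) => (i : ℕ) < k)).powerset.image
      (fun J => ∑ j ∈ J, d j) with hS
  have key : ∀ k, k ≤ p - 1 → min p (k + 1) ≤ (S k).card := by
    intro k
    induction k with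
    | zero =>
      intro _
      have h0 : (0 : ZMod p) ∈ S 0 := by
        simp only [hS, Finset.mem_image]
        exact ⟨∅, by simp, by simp⟩
      have : 1 ≤ (S 0).card := Finset.card_pos.mpr ⟨0, h0⟩
      omega
    | succ k ih =>
      intro hk1
      have hk : k < p - 1 := by omega
      have hik : min p (k + 1) ≤ (S k).card := ih (by omega)
      have hkp : k + 1 < p := by omega
      have hSk : k + 1 ≤ (S k).card := by omega
      -- Cauchy-Davenport step
      have hsub : ({0, d ⟨k, hk⟩} : Finset (ZMod p)) + S k ⊆ S (k + 1) := by
        intro x hx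
        rw [Finset.mem_add] at hx
        obtain ⟨a, ha, b, hb, rfl⟩ := hx
        simp only [hS, Finset.mem_image, Finset.mem_powerset] at hb ⊢
        obtain ⟨J, hJ, rfl⟩ := hb
        have hJ' : ∀ j ∈ J, (j : ℕ) < k := by
          intro j hj
          have := hJ hj
          simpa using this
        rcases Finset.mem_insert.mp ha with rfl | ha
        · exact ⟨J, fun j hj => by simp [Nat.lt_succ_of_lt (hJ' j hj), (hJ' j hj).le], by simp⟩
        · simp only [Finset.mem_singleton] at ha
          subst ha
          refine ⟨insert ⟨k, hk⟩ J, ?_, ?_⟩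
          · intro j hj
            rcases Finset.mem_insert.mp hj with rfl | hj
            · simp
            · simp [Nat.lt_succ_of_lt (hJ' j hj), (hJ' j hj).le]
          · rw [Finset.sum_insert]
            intro hmem
            exact absurd (hJ' _ hmem) (by simp)
      have hne : (S k).Nonempty := Finset.card_pos.mp (by omega)
      have hcd := ZMod.cauchy_davenport hp (s := {0, d ⟨k, hk⟩}) (t := S k)
        (by simp) hne
      have h2 : ({0, d ⟨k, hk⟩} : Finset (ZMod p)).card = 2 := by
        rw [Finset.card_insert_of_notMem (by simpa using (hd ⟨k, hk⟩).symm)]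
        simp
      have hle := Finset.card_le_card hsub
      rw [h2] at hcd
      omega
  have hfinal := key (p - 1) le_rfl
  have hp2 : 2 ≤ p := hp.two_le
  have : min p (p - 1 + 1) = p := by omega
  rw [this] at hfinal
  have hcard : (S (p - 1)).card = p := le_antisymm
    (by simpa using Finset.card_le_card (Finset.subset_univ (S (p - 1)))) hfinal
  have huniv : S (p - 1) = Finset.univ := Finset.eq_univ_of_card _ (by simpa using hcard)
  have hτ : τ ∈ S (p - 1) := huniv ▸ Finset.mem_univ τ
  simp only [hS, Finset.mem_image, Finset.mem_powerset] at hτ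
  obtain ⟨J, _, hJsum⟩ := hτ
  exact ⟨J, hJsum⟩
end

section
/- Let x, y be coprime integers with x, y > 1, and let ℓ ≥ x, m ≥ y, and N be an integer with (x-1)(y-1) ≤ N ≤ ℓy + mx - (x-1)(y-1). Let a₀ ∈ {0, ..., x-1} with a₀y ≡ N (mod x), b₀ = (N - a₀y)/x, k = max(0, ⌈(b₀ - m)/y⌉), α = a₀ + kx, β = b₀ - ky. Then b₀ is a nonnegative integer, N = αy + βx, 0 ≤ α ≤ ℓ, and 0 ≤ β ≤ m. -/
/-!
Since `a₀ ≤ x - 1`, the lower bound `(x - 1)(y - 1) ≤ N` forces `b₀ x > -x`, so `b₀ ≥ 0`.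
The shift `k` is the least nonnegative integer with `b₀ - k y ≤ m`; when `k > 0` this
minimality gives `β > m - y`. Substituting `α ↦ ℓ - α`, `β ↦ m - β` turns the upper bound on
`N` into the lower bound with the roles of `x` and `y` exchanged, so the same argument that gave
`b₀ ≥ 0` now gives `α ≤ ℓ`.
-/

section CeilDiv

variable {K : Type*} [Field K] [LinearOrder K] [IsStrictOrderedRing K] [FloorRing K]

theorem Int.le_ceil_intCast_div_mul {d y : ℤ} (hy : 0 < y) : d ≤ ⌈(d : K) / y⌉ * y := by
  have hyK : (0 : K) < y := by exact_mod_cast hy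
  have h := Int.le_ceil ((d : K) / y)
  rw [div_le_iff₀ hyK] at h
  exact_mod_cast h

theorem Int.ceil_intCast_div_sub_one_mul_lt {d y : ℤ} (hy : 0 < y) :
    (⌈(d : K) / y⌉ - 1) * y < d := by
  have hyK : (0 : K) < y := by exact_mod_cast hy
  have h : ((⌈(d : K) / y⌉ - 1 : ℤ) : K) < d / y := Int.lt_ceil.mp (sub_one_lt _)
  rw [lt_div_iff₀ hyK] at h
  exact_mod_cast h

end CeilDiv

theorem nonneg_of_sylvester_le_mul_add_mul {x y a b : ℤ} (hx : 0 < x) (hy : 0 < y)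
    (ha : a < x) (h : (x - 1) * (y - 1) ≤ a * y + b * x) : 0 ≤ b := by
  have hay : a * y ≤ (x - 1) * y := mul_le_mul_of_nonneg_right (by omega) hy.le
  have hbx : -1 * x < b * x := by linarith
  have := lt_of_mul_lt_mul_right hbx hx.le
  omega

/-- `hc` and `hc'` say `c = ⌈(b - m) / y⌉`, so `max 0 c` is the least `k ≥ 0` with
`b - k * y ≤ m`. -/
theorem sub_max_zero_mul_mem_window {y m b c : ℤ} (hy : 0 < y) (hm : y ≤ m) (hb : 0 ≤ b)
    (hc : b - m ≤ c * y) (hc' : (c - 1) * y < b - m) :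
    0 ≤ b - max 0 c * y ∧ b - max 0 c * y ≤ m ∧ (max 0 c = 0 ∨ m - (b - max 0 c * y) < y) := by
  rcases le_or_gt c 0 with hc0 | hc0
  · have hcy : c * y ≤ 0 := mul_nonpos_of_nonpos_of_nonneg hc0 hy.le
    rw [max_eq_left hc0]
    omega
  · rw [max_eq_right hc0.le]
    exact ⟨by linarith, by linarith, Or.inr (by linarith)⟩

theorem stmt_13_general (x y ℓ m N a₀ : ℤ) (hx : 1 < x) (hy : 1 < y)
    (hℓ : x ≤ ℓ) (hm : y ≤ m)
    (hN1 : (x - 1) * (y - 1) ≤ N) (hN2 : N ≤ ℓ * y + m * x - (x - 1) * (y - 1))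
    (ha0 : 0 ≤ a₀) (ha0' : a₀ < x) (hmod : a₀ * y ≡ N [ZMOD x]) :
    x ∣ N - a₀ * y ∧
    (let b₀ : ℤ := (N - a₀ * y) / x
     let k : ℤ := max 0 ⌈((b₀ - m : ℤ) : ℚ) / (y : ℚ)⌉
     let α : ℤ := a₀ + k * x
     let β : ℤ := b₀ - k * y
     0 ≤ b₀ ∧ N = α * y + β * x ∧ 0 ≤ α ∧ α ≤ ℓ ∧ 0 ≤ β ∧ β ≤ m) := by
  have hd : x ∣ N - a₀ * y := hmod.dvd
  refine ⟨hd, ?_⟩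
  intro b₀ k α β
  have hb : b₀ * x = N - a₀ * y := Int.ediv_mul_cancel hd
  have hb0 : 0 ≤ b₀ :=
    nonneg_of_sylvester_le_mul_add_mul (y := y) (by omega) (by omega) ha0' (by linarith)
  obtain ⟨hβ0, hβm, hshift⟩ : 0 ≤ β ∧ β ≤ m ∧ (k = 0 ∨ m - β < y) :=
    sub_max_zero_mul_mem_window (by omega) hm hb0
      (Int.le_ceil_intCast_div_mul (by omega)) (Int.ceil_intCast_div_sub_one_mul_lt (by omega))
  have hk : 0 ≤ k := le_max_left _ _
  have hα : α = a₀ + k * x := rfl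
  have hβ : β = b₀ - k * y := rfl
  clear_value b₀ k α β
  have hN : N = α * y + β * x := by rw [hα, hβ]; linear_combination -hb
  refine ⟨hb0, hN, by rw [hα]; positivity, ?_, hβ0, hβm⟩
  rcases hshift with hk0 | hβy
  · rw [hα, hk0]
    omega
  · have := nonneg_of_sylvester_le_mul_add_mul (x := y) (y := x) (a := m - β) (b := ℓ - α)
      (by omega) (by omega) hβy (by linarith)
    omega

theorem stmt_13 (x y ℓ m N a₀ : ℤ) (hx : 1 < x) (hy : 1 < y) (hcop : IsCoprime x y)
    (hℓ : x ≤ ℓ) (hm : y ≤ m)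
    (hN1 : (x - 1) * (y - 1) ≤ N) (hN2 : N ≤ ℓ * y + m * x - (x - 1) * (y - 1))
    (ha0 : 0 ≤ a₀) (ha0' : a₀ < x) (hmod : a₀ * y ≡ N [ZMOD x]) :
    x ∣ N - a₀ * y ∧
    (let b₀ : ℤ := (N - a₀ * y) / x
     let k : ℤ := max 0 ⌈((b₀ - m : ℤ) : ℚ) / (y : ℚ)⌉
     let α : ℤ := a₀ + k * x
     let β : ℤ := b₀ - k * y
     0 ≤ b₀ ∧ N = α * y + β * x ∧ 0 ≤ α ∧ α ≤ ℓ ∧ 0 ≤ β ∧ β ≤ m) :=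
  stmt_13_general x y ℓ m N a₀ hx hy hℓ hm hN1 hN2 ha0 ha0' hmod
end
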